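/- arXiv:2104.08764 — 7 statements merged into one kernel-verified Lean document; each statement's English description precedes it below -/
import Mathlib

section
/- Let A be a positive definite symmetric d×d real matrix, b ∈ ℝ^d, and let G be a symmetric d×d matrix with A ⪯ G. For x ∈ ℝ^d set x₊ := x − G⁻¹(Ax − b). Then λ_f(x₊) ≤ σ_A(G) · λ_f(x). -/
open Matrix

/-- `σ_A(G) = tr((G - A) A⁻¹)`. -/
noncomputable def sigmaA {d : ℕ} (A G : Matrix (Fin d) (Fin d) ℝ) : ℝ :=
  ((G - A) * A⁻¹).trace

/-- `λ_f(x) = sqrt((Ax - b)ᵀ A⁻¹ (Ax - b))` for the quadratic `f(x) = ½ xᵀAx - bᵀx`. -/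
noncomputable def lambdaF {d : ℕ} (A : Matrix (Fin d) (Fin d) ℝ) (b x : Fin d → ℝ) : ℝ :=
  Real.sqrt ((A *ᵥ x - b) ⬝ᵥ (A⁻¹ *ᵥ (A *ᵥ x - b)))

/-!
With `g = A x - b` and `N = A⁻¹ - G⁻¹`, the gradient after the step is `A N g`, so
`λ_f(x₊)² = gᵀ N A N g`. Because `A ⪯ G`, `N` is positive semidefinite, and
`tr(N A) ≤ σ_A(G)` since the difference is `tr((G - A) N) ≥ 0`.
Factor `A = Bᵀ B` and put `H = B N Bᵀ ⪰ 0` and `u = B⁻ᵀ g`; then `gᵀ N A N g = uᵀ H² u`,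
`|u|² = gᵀ A⁻¹ g` and `tr H = tr(N A)`. Finally `uᵀ H² u ≤ tr(H²) |u|² ≤ (tr H)² |u|²`,
both steps instances of `tr(P Q) ≤ tr P · tr Q` for `P, Q ⪰ 0`, which is submultiplicativity
of the Frobenius norm.
-/

open scoped ComplexOrder MatrixOrder

namespace Matrix

variable {m n : Type*} [Fintype m] [Fintype n]

section Frobenius

attribute [local instance] frobeniusNormedAddCommGroup

lemma trace_transpose_mul_self_eq_frobenius_norm_sq (M : Matrix m n ℝ) :
    (Mᵀ * M).trace = ‖M‖ ^ 2 := by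
  rw [frobenius_norm_def, ← Real.rpow_natCast, ← Real.rpow_mul (by positivity)]
  norm_num [trace, mul_apply, Finset.sum_comm (γ := m), sq]

lemma PosSemidef.trace_mul_le_trace_mul_trace [DecidableEq n] {P Q : Matrix n n ℝ}
    (hP : P.PosSemidef) (hQ : Q.PosSemidef) : (P * Q).trace ≤ P.trace * Q.trace := by
  obtain ⟨B, rfl⟩ := CStarAlgebra.nonneg_iff_eq_star_mul_self.mp hP.nonneg
  obtain ⟨C, rfl⟩ := CStarAlgebra.nonneg_iff_eq_star_mul_self.mp hQ.nonneg
  simp only [star_eq_conjTranspose, conjTranspose_eq_transpose_of_trivial]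
  have hcycle : (Bᵀ * B * (Cᵀ * C)).trace = ((C * Bᵀ)ᵀ * (C * Bᵀ)).trace := by
    rw [transpose_mul, transpose_transpose, mul_assoc, trace_mul_comm]
    simp only [mul_assoc]
  rw [hcycle, trace_transpose_mul_self_eq_frobenius_norm_sq,
    trace_transpose_mul_self_eq_frobenius_norm_sq, trace_transpose_mul_self_eq_frobenius_norm_sq]
  calc ‖C * Bᵀ‖ ^ 2 ≤ (‖C‖ * ‖Bᵀ‖) ^ 2 := by gcongr; exact frobenius_norm_mul C Bᵀ
    _ = ‖B‖ ^ 2 * ‖C‖ ^ 2 := by rw [frobenius_norm_transpose]; ring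

end Frobenius

lemma PosSemidef.trace_mul_nonneg {𝕜 : Type*} [RCLike 𝕜] [DecidableEq n] {P Q : Matrix n n 𝕜}
    (hP : P.PosSemidef) (hQ : Q.PosSemidef) : 0 ≤ (P * Q).trace := by
  obtain ⟨B, rfl⟩ := CStarAlgebra.nonneg_iff_eq_star_mul_self.mp hP.nonneg
  rw [mul_assoc, trace_mul_comm, star_eq_conjTranspose]
  exact (hQ.mul_mul_conjTranspose_same B).trace_nonneg

lemma PosSemidef.dotProduct_mulVec_le_trace_mul [DecidableEq n] {K : Matrix n n ℝ}
    (hK : K.PosSemidef) (v : n → ℝ) : v ⬝ᵥ (K *ᵥ v) ≤ K.trace * (v ⬝ᵥ v) := by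
  have hv : (vecMulVec v v).PosSemidef := by
    simpa using posSemidef_vecMulVec_self_star v
  have htr : (K * vecMulVec v v).trace = v ⬝ᵥ (K *ᵥ v) := by
    simp only [trace, diag, mul_apply, vecMulVec_apply, dotProduct, mulVec, Finset.mul_sum]
    exact Finset.sum_congr rfl fun i _ => Finset.sum_congr rfl fun j _ => by ring
  rw [← htr, ← trace_vecMulVec]
  exact hK.trace_mul_le_trace_mul_trace hv

lemma transpose_mulVec_dotProduct_mulVec (C : Matrix m n ℝ) (M : Matrix n n ℝ) (g : m → ℝ) :
    (Cᵀ *ᵥ g) ⬝ᵥ (M *ᵥ (Cᵀ *ᵥ g)) = g ⬝ᵥ ((C * M * Cᵀ) *ᵥ g) := by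
  rw [← mulVec_mulVec, ← mulVec_mulVec, dotProduct_mulVec g C, mulVec_transpose]

lemma PosDef.dotProduct_mul_mul_mulVec_le_trace_sq_mul [DecidableEq n] {A N : Matrix n n ℝ}
    (hA : A.PosDef) (hN : N.PosSemidef) (g : n → ℝ) :
    g ⬝ᵥ ((N * A * N) *ᵥ g) ≤ (N * A).trace ^ 2 * (g ⬝ᵥ (A⁻¹ *ᵥ g)) := by
  obtain ⟨B, hB, rfl⟩ :=
    CStarAlgebra.isStrictlyPositive_iff_eq_star_mul_self.mp hA.isStrictlyPositive
  rw [star_eq_conjTranspose, conjTranspose_eq_transpose_of_trivial]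
  have := hB.invertible
  have hBBt : Bᵀ * B⁻¹ᵀ = 1 := by rw [← transpose_mul, inv_mul_of_invertible, transpose_one]
  set H := B * N * Bᵀ
  have hH : H.PosSemidef := by simpa using hN.mul_mul_conjTranspose_same B
  have hHH : (H * H).PosSemidef := by simpa [sq] using hH.pow 2
  have htrH : H.trace = (N * (Bᵀ * B)).trace := by
    rw [trace_mul_comm, ← mul_assoc, trace_mul_comm]
  have hform : g ⬝ᵥ ((N * (Bᵀ * B) * N) *ᵥ g) =
      (B⁻¹ᵀ *ᵥ g) ⬝ᵥ ((H * H) *ᵥ (B⁻¹ᵀ *ᵥ g)) := by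
    rw [transpose_mulVec_dotProduct_mulVec]
    congr 2
    calc N * (Bᵀ * B) * N = (B⁻¹ * B) * N * Bᵀ * B * N * (Bᵀ * B⁻¹ᵀ) := by
          rw [inv_mul_of_invertible, hBBt]; simp only [one_mul, mul_one, mul_assoc]
      _ = B⁻¹ * (H * H) * B⁻¹ᵀ := by simp only [H, mul_assoc]
  have hnorm : g ⬝ᵥ ((Bᵀ * B)⁻¹ *ᵥ g) = (B⁻¹ᵀ *ᵥ g) ⬝ᵥ (B⁻¹ᵀ *ᵥ g) := by
    have := transpose_mulVec_dotProduct_mulVec B⁻¹ 1 g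
    rw [one_mulVec, mul_one] at this
    rw [mul_inv_rev, ← transpose_nonsing_inv, this]
  rw [hform, hnorm, ← htrH]
  calc _ ≤ (H * H).trace * ((B⁻¹ᵀ *ᵥ g) ⬝ᵥ (B⁻¹ᵀ *ᵥ g)) :=
        hHH.dotProduct_mulVec_le_trace_mul _
    _ ≤ H.trace ^ 2 * ((B⁻¹ᵀ *ᵥ g) ⬝ᵥ (B⁻¹ᵀ *ᵥ g)) := by
        gcongr ?_ * _
        · simpa using dotProduct_star_self_nonneg (B⁻¹ᵀ *ᵥ g)
        · rw [sq]
          exact hH.trace_mul_le_trace_mul_trace hH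

lemma PosDef.posSemidef_inv_sub_inv [DecidableEq n] {A G : Matrix n n ℝ} (hA : A.PosDef)
    (hGA : (G - A).PosSemidef) : (A⁻¹ - G⁻¹).PosSemidef := by
  set D := G - A
  have hG : G.PosDef := by simpa [D] using hA.add_posSemidef hGA
  have := hA.isUnit.invertible
  have := hG.isUnit.invertible
  have hid : A⁻¹ - G⁻¹ = G⁻¹ * (D + D * A⁻¹ * D) * G⁻¹ :=
    calc A⁻¹ - G⁻¹ = G⁻¹ * D * A⁻¹ := by
          simp only [D, sub_mul, mul_sub, inv_mul_of_invertible, one_mul, mul_assoc,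
            mul_inv_of_invertible, mul_one]
      _ = G⁻¹ * D * A⁻¹ * (A + D) * G⁻¹ := by
          rw [add_sub_cancel, mul_inv_cancel_right_of_invertible]
      _ = G⁻¹ * (D + D * A⁻¹ * D) * G⁻¹ := by
          simp only [mul_add, add_mul, mul_assoc, inv_mul_cancel_left_of_invertible]
  have hDAD : (D + D * A⁻¹ * D).PosSemidef := by
    refine hGA.add ?_
    simpa only [hGA.isHermitian.eq] using hA.inv.posSemidef.conjTranspose_mul_mul_same D
  rw [hid]
  simpa only [hG.inv.isHermitian.eq] using hDAD.mul_mul_conjTranspose_same G⁻¹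

lemma PosDef.trace_inv_sub_inv_mul_le_sigmaA {d : ℕ} {A G : Matrix (Fin d) (Fin d) ℝ}
    (hA : A.PosDef) (hGA : (G - A).PosSemidef) : ((A⁻¹ - G⁻¹) * A).trace ≤ sigmaA A G := by
  have hG : G.PosDef := by simpa using hA.add_posSemidef hGA
  have := hA.isUnit.invertible
  have := hG.isUnit.invertible
  -- `σ_A(G) - tr((A⁻¹ - G⁻¹) A) = tr((G - A)(A⁻¹ - G⁻¹))`, using `tr(A G⁻¹) = tr(G⁻¹ A)`.
  have hcross := hGA.trace_mul_nonneg (hA.posSemidef_inv_sub_inv hGA)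
  simp only [mul_sub, sub_mul, mul_inv_of_invertible, trace_sub] at hcross
  simp only [sigmaA, sub_mul, mul_inv_of_invertible, inv_mul_of_invertible, trace_sub]
  rw [trace_mul_comm A G⁻¹] at hcross
  linarith

end Matrix

theorem lambda_decrease_quadratic_general
    {d : ℕ} {A G : Matrix (Fin d) (Fin d) ℝ}
    (hA : A.PosDef) (hGA : (G - A).PosSemidef)
    (b x : Fin d → ℝ) :
    lambdaF A b (x - G⁻¹ *ᵥ (A *ᵥ x - b)) ≤ sigmaA A G * lambdaF A b x := by
  set g := A *ᵥ x - b
  set N := A⁻¹ - G⁻¹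
  have hN : N.PosSemidef := hA.posSemidef_inv_sub_inv hGA
  have := hA.isUnit.invertible
  have hgrad : A *ᵥ (x - G⁻¹ *ᵥ g) - b = A *ᵥ (N *ᵥ g) := by
    rw [mulVec_mulVec, mul_sub, mul_inv_of_invertible, sub_mulVec, one_mulVec, mulVec_sub,
      mulVec_mulVec]
    simp only [g]
    abel
  have hform : (A *ᵥ (N *ᵥ g)) ⬝ᵥ (A⁻¹ *ᵥ (A *ᵥ (N *ᵥ g))) = g ⬝ᵥ ((N * A * N) *ᵥ g) := by
    have hNt : Nᵀ = N := by simpa using hN.isHermitian.eq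
    rw [mulVec_mulVec _ A⁻¹, inv_mul_of_invertible, one_mulVec, dotProduct_comm]
    simpa only [hNt] using transpose_mulVec_dotProduct_mulVec N A g
  have htr : 0 ≤ (N * A).trace := hN.trace_mul_nonneg hA.posSemidef
  unfold lambdaF
  rw [hgrad, hform]
  calc √(g ⬝ᵥ ((N * A * N) *ᵥ g)) ≤ √((N * A).trace ^ 2 * (g ⬝ᵥ (A⁻¹ *ᵥ g))) :=
        Real.sqrt_le_sqrt (hA.dotProduct_mul_mul_mulVec_le_trace_sq_mul hN g)
    _ = (N * A).trace * √(g ⬝ᵥ (A⁻¹ *ᵥ g)) := by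
        rw [Real.sqrt_mul (sq_nonneg _), Real.sqrt_sq htr]
    _ ≤ sigmaA A G * √(g ⬝ᵥ (A⁻¹ *ᵥ g)) := by
        gcongr
        exact hA.trace_inv_sub_inv_mul_le_sigmaA hGA

/-- One quasi-Newton step for a quadratic:
`λ_f(x₊) ≤ σ_A(G) ⬝ λ_f(x)` where `x₊ = x − G⁻¹(Ax − b)`. -/
theorem lambda_decrease_quadratic
    {d : ℕ} {A G : Matrix (Fin d) (Fin d) ℝ}
    (hA : A.PosDef) (hAsymm : A.IsSymm) (hGsymm : G.IsSymm) (hGA : (G - A).PosSemidef)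
    (b x : Fin d → ℝ) :
    lambdaF A b (x - G⁻¹ *ᵥ (A *ᵥ x - b)) ≤ sigmaA A G * lambdaF A b x :=
  lambda_decrease_quadratic_general hA hGA b x
end

section
/- Let A be a positive definite symmetric d×d real matrix and G_0 a symmetric matrix with G_0 ⪰ A. For 0 ≤ k < d, let u_k = e_{i_k} be a standard basis vector chosen greedily, i.e. (G_k − A)_{i_k, i_k} ≥ (G_k − A)_{j,j} for every index j, and set G_{k+1} := SR1(G_k, A, u_k). Then for every 0 ≤ k ≤ d: G_k ⪰ A and τ_A(G_k) ≤ (1 − k/d) · τ_A(G_0); in particular G_d = A. -/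
open Matrix

/-- `τ_A(G) = tr(G - A)`. -/
noncomputable def tauA {d : ℕ} (A G : Matrix (Fin d) (Fin d) ℝ) : ℝ :=
  (G - A).trace

/-- The SR1 quasi-Newton update. -/
noncomputable def SR1 {d : ℕ} (G A : Matrix (Fin d) (Fin d) ℝ) (u : Fin d → ℝ) :
    Matrix (Fin d) (Fin d) ℝ :=
  if G *ᵥ u = A *ᵥ u then G
  else G - (u ⬝ᵥ ((G - A) *ᵥ u))⁻¹ • vecMulVec ((G - A) *ᵥ u) (u ᵥ* (G - A))

/-!
The residual `H = G - A` evolves under SR1 by Wedderburn's rank-one reduction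
`H ↦ H - (H u)(H u)ᵀ / (uᵀ H u)`. By Cauchy–Schwarz for the form `xᵀ H y` it stays positive
semidefinite; for `u = e_m` it zeroes the `m`-th diagonal entry, keeps zero diagonal entries zero
(a zero diagonal entry of a PSD matrix kills its row), and lowers the trace by at least `H_mm`.
After `k` steps at most `d - k` diagonal entries are nonzero, so the greedy pivot satisfies
`tr H ≤ (d - k) H_mm`, and each step multiplies the trace by at most `(d - k - 1)/(d - k)`.
-/

open Finset

namespace Matrix

variable {n : Type*} [Fintype n]

/-- Wedderburn's rank-one reduction of `H` along `u`. When `u ⬝ᵥ H *ᵥ u = 0` the junk value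
`0⁻¹ = 0` makes it `H` itself. -/
noncomputable def wedderburnStep (H : Matrix n n ℝ) (u : n → ℝ) : Matrix n n ℝ :=
  H - (u ⬝ᵥ H *ᵥ u)⁻¹ • vecMulVec (H *ᵥ u) (u ᵥ* H)

theorem wedderburnStep_single_apply [DecidableEq n] (H : Matrix n n ℝ) (m j l : n) :
    wedderburnStep H (Pi.single m 1) j l = H j l - (H m m)⁻¹ * (H j m * H m l) := by
  simp [wedderburnStep, single_dotProduct, vecMulVec_apply]

theorem dotProduct_wedderburnStep_mulVec (H : Matrix n n ℝ) (u x : n → ℝ) :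
    x ⬝ᵥ wedderburnStep H u *ᵥ x =
      x ⬝ᵥ H *ᵥ x - (u ⬝ᵥ H *ᵥ u)⁻¹ * ((x ⬝ᵥ H *ᵥ u) * (u ⬝ᵥ H *ᵥ x)) := by
  simp only [wedderburnStep, sub_mulVec, smul_mulVec, vecMulVec_mulVec, dotProduct_sub,
    dotProduct_smul, ← dotProduct_mulVec, op_smul_eq_smul, smul_eq_mul]
  ring

theorem trace_wedderburnStep (H : Matrix n n ℝ) (u : n → ℝ) :
    (wedderburnStep H u).trace = H.trace - (u ⬝ᵥ H *ᵥ u)⁻¹ * (H *ᵥ u ⬝ᵥ u ᵥ* H) := by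
  simp [wedderburnStep, trace_sub, trace_smul]

theorem trace_le_card_diag_ne_zero_mul {H : Matrix n n ℝ} {m : n} (hm : ∀ j, H j j ≤ H m m) :
    H.trace ≤ #{j | H j j ≠ 0} * H m m :=
  calc H.trace = ∑ j ∈ {j | H j j ≠ 0}, H j j := (sum_filter_ne_zero _).symm
    _ ≤ #{j | H j j ≠ 0} • H m m := sum_le_card_nsmul _ _ _ fun j _ ↦ hm j
    _ = #{j | H j j ≠ 0} * H m m := nsmul_eq_mul _ _

namespace PosSemidef

variable {H : Matrix n n ℝ}

theorem vecMul_eq_mulVec (hH : H.PosSemidef) (u : n → ℝ) : u ᵥ* H = H *ᵥ u := by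
  rw [← mulVec_transpose, ← conjTranspose_eq_transpose_of_trivial, hH.isHermitian.eq]

theorem dotProduct_mulVec_comm (hH : H.PosSemidef) (x y : n → ℝ) :
    x ⬝ᵥ H *ᵥ y = y ⬝ᵥ H *ᵥ x := by
  rw [dotProduct_mulVec, hH.vecMul_eq_mulVec, dotProduct_comm]

theorem dotProduct_mulVec_self_nonneg (hH : H.PosSemidef) (x : n → ℝ) : 0 ≤ x ⬝ᵥ H *ᵥ x := by
  simpa using hH.dotProduct_mulVec_nonneg x

theorem dotProduct_mulVec_sq_le (hH : H.PosSemidef) (x y : n → ℝ) :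
    (x ⬝ᵥ H *ᵥ y) ^ 2 ≤ (x ⬝ᵥ H *ᵥ x) * (y ⬝ᵥ H *ᵥ y) := by
  classical
  have := (toBilin' H).apply_mul_apply_le_of_forall_zero_le
    (by simpa [toBilin'_apply'] using hH.dotProduct_mulVec_self_nonneg) x y
  simp only [toBilin'_apply'] at this
  rwa [hH.dotProduct_mulVec_comm y x, ← sq] at this

theorem apply_eq_zero_of_diag_eq_zero [DecidableEq n] (hH : H.PosSemidef) {j : n}
    (hj : H j j = 0) (l : n) : H l j = 0 := by
  have hcol : H *ᵥ Pi.single j 1 = 0 :=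
    (hH.dotProduct_mulVec_zero_iff _).mp (by simpa [mulVec_single_one, single_dotProduct] using hj)
  simpa [mulVec_single_one] using congrFun hcol l

protected theorem wedderburnStep (hH : H.PosSemidef) (u : n → ℝ) :
    (wedderburnStep H u).PosSemidef := by
  have hsymm : (wedderburnStep H u).IsHermitian := by
    rw [wedderburnStep, hH.vecMul_eq_mulVec]
    have := (posSemidef_vecMulVec_self_star (H *ᵥ u)).isHermitian
    rw [star_trivial] at this
    exact hH.isHermitian.sub (this.smul rfl)
  refine .of_dotProduct_mulVec_nonneg hsymm fun x ↦ ?_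
  rw [star_trivial, dotProduct_wedderburnStep_mulVec, hH.dotProduct_mulVec_comm u x, ← sq,
    sub_nonneg]
  rcases (hH.dotProduct_mulVec_self_nonneg u).eq_or_lt with hu | hu
  · simp [← hu, hH.dotProduct_mulVec_self_nonneg x]
  · rw [inv_mul_le_iff₀ hu, mul_comm]
    exact hH.dotProduct_mulVec_sq_le x u

theorem trace_wedderburnStep_single_le [DecidableEq n] (hH : H.PosSemidef) (m : n) :
    (wedderburnStep H (Pi.single m 1)).trace ≤ H.trace - H m m := by
  have hcol : H m m ^ 2 ≤ H *ᵥ Pi.single m 1 ⬝ᵥ Pi.single m 1 ᵥ* H := by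
    rw [hH.vecMul_eq_mulVec, mulVec_single_one, dotProduct, sq]
    exact single_le_sum (f := fun j ↦ H.col m j * H.col m j) (fun j _ ↦ mul_self_nonneg _)
      (mem_univ m)
  have hc : Pi.single m 1 ⬝ᵥ H *ᵥ Pi.single m 1 = H m m := by simp [single_dotProduct]
  rw [trace_wedderburnStep, sub_le_sub_iff_left, hc]
  rcases (hH.diag_nonneg (i := m)).eq_or_lt with hm | hm
  · simp [← hm]
  · rwa [le_inv_mul_iff₀ hm, ← sq]

theorem diag_wedderburnStep_single_ne_zero_subset [DecidableEq n] (hH : H.PosSemidef) (m : n) :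
    ({j | wedderburnStep H (Pi.single m 1) j j ≠ 0} : Finset n) ⊆
      ({j | H j j ≠ 0} : Finset n).erase m := by
  intro j
  simp only [mem_filter, mem_univ, true_and, mem_erase, wedderburnStep_single_apply]
  refine fun hj ↦ ⟨?_, fun hjj ↦ hj ?_⟩
  · rintro rfl
    rw [← mul_assoc, inv_mul_mul_self, sub_self] at hj
    exact hj rfl
  · simp [hjj, hH.apply_eq_zero_of_diag_eq_zero hjj m]

theorem card_diag_wedderburnStep_single_ne_zero_le [DecidableEq n] (hH : H.PosSemidef) {m : n}
    (hm : ∀ j, H j j ≤ H m m) {r : ℕ} (hr : #{j | H j j ≠ 0} ≤ r + 1) :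
    #{j | wedderburnStep H (Pi.single m 1) j j ≠ 0} ≤ r := by
  refine (card_le_card (hH.diag_wedderburnStep_single_ne_zero_subset m)).trans ?_
  by_cases hmm : H m m = 0
  · have hdiag : ({j | H j j ≠ 0} : Finset n) = ∅ :=
      filter_eq_empty_iff.mpr fun j _ ↦ not_not.mpr ((hmm ▸ hm j).antisymm hH.diag_nonneg)
    simp [hdiag]
  · rw [card_erase_of_mem (by simpa using hmm)]
    omega

theorem trace_wedderburnStep_single_le_mul [DecidableEq n] (hH : H.PosSemidef) {m : n}
    (hm : ∀ j, H j j ≤ H m m) {r : ℕ} (hr : #{j | H j j ≠ 0} ≤ r + 1) :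
    (r + 1) * (wedderburnStep H (Pi.single m 1)).trace ≤ r * H.trace := by
  have hstep := hH.trace_wedderburnStep_single_le m
  have hgreedy : H.trace ≤ (r + 1) * H m m :=
    (trace_le_card_diag_ne_zero_mul hm).trans
      (mul_le_mul_of_nonneg_right (by exact_mod_cast hr) hH.diag_nonneg)
  nlinarith

end PosSemidef

end Matrix

theorem SR1_sub_eq_wedderburnStep {d : ℕ} (G A : Matrix (Fin d) (Fin d) ℝ) (u : Fin d → ℝ) :
    SR1 G A u - A = wedderburnStep (G - A) u := by
  unfold SR1 wedderburnStep
  split_ifs with h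
  · have : (G - A) *ᵥ u = 0 := by rw [sub_mulVec, h, sub_self]
    simp [this]
  · exact sub_right_comm _ _ _

theorem greedy_wedderburnStep_invariant {n : Type*} [Fintype n] [DecidableEq n]
    {H : ℕ → Matrix n n ℝ} {i : ℕ → n} (h0 : (H 0).PosSemidef)
    (hgreedy : ∀ k < Fintype.card n, ∀ j, H k j j ≤ H k (i k) (i k))
    (hstep : ∀ k < Fintype.card n, H (k + 1) = wedderburnStep (H k) (Pi.single (i k) 1)) :
    ∀ k ≤ Fintype.card n, (H k).PosSemidef ∧ #{j | H k j j ≠ 0} ≤ Fintype.card n - k ∧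
      (H k).trace ≤ (1 - k / Fintype.card n) * (H 0).trace := by
  set d := Fintype.card n
  intro k hk
  induction k with
  | zero => exact ⟨h0, by simpa using card_le_univ _, by simp⟩
  | succ k ih =>
    have hkd : k < d := hk
    obtain ⟨hpsd, hcard, htr⟩ := ih hkd.le
    have hr : #{j | H k j j ≠ 0} ≤ (d - (k + 1)) + 1 := by omega
    rw [hstep k hkd]
    refine ⟨hpsd.wedderburnStep _,
      hpsd.card_diag_wedderburnStep_single_ne_zero_le (hgreedy k hkd) hr, ?_⟩
    have hcontract := hpsd.trace_wedderburnStep_single_le_mul (hgreedy k hkd) hr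
    have hd : (0 : ℝ) < d := by exact_mod_cast hkd.trans_le' (Nat.zero_le _)
    have hkd' : (k : ℝ) + 1 ≤ d := by exact_mod_cast hkd
    rw [Nat.cast_sub hkd] at hcontract
    have hratio (l : ℝ) : (1 - l / d) * (H 0).trace = (d - l) * ((H 0).trace / d) := by
      field_simp
    rw [hratio] at htr ⊢
    push_cast at hcontract ⊢
    nlinarith

theorem greedy_SR1_matrix_approximation_general
    {d : ℕ} {A : Matrix (Fin d) (Fin d) ℝ}
    {G₀ : Matrix (Fin d) (Fin d) ℝ} (hG₀ : (G₀ - A).PosSemidef)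
    (G : ℕ → Matrix (Fin d) (Fin d) ℝ) (i : ℕ → Fin d)
    (hGinit : G 0 = G₀)
    (hgreedy : ∀ k < d, ∀ j : Fin d, (G k - A) j j ≤ (G k - A) (i k) (i k))
    (hGrec : ∀ k < d, G (k + 1) = SR1 (G k) A (Pi.single (i k) 1)) :
    (∀ k ≤ d, (G k - A).PosSemidef ∧ tauA A (G k) ≤ (1 - (k : ℝ) / d) * tauA A G₀) ∧
      G d = A := by
  have key := greedy_wedderburnStep_invariant (H := fun k ↦ G k - A) (i := i) (hGinit ▸ hG₀)
    (by simpa using hgreedy)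
    (fun k hk ↦ by simp only [hGrec k (by simpa using hk), SR1_sub_eq_wedderburnStep])
  simp only [Fintype.card_fin] at key
  refine ⟨fun k hk ↦ ?_, ?_⟩
  · obtain ⟨hpsd, -, htr⟩ := key k hk
    exact ⟨hpsd, by simpa [tauA, hGinit] using htr⟩
  · obtain ⟨hpsd, hcard, -⟩ := key d le_rfl
    have hdiag (j : Fin d) : (G d - A) j j = 0 := by
      by_contra hj
      have : 0 < #{j | (G d - A) j j ≠ 0} := card_pos.mpr ⟨j, mem_filter.mpr ⟨mem_univ _, hj⟩⟩
      omega
    exact sub_eq_zero.mp (hpsd.trace_eq_zero_iff.mp (sum_eq_zero fun j _ ↦ hdiag j))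

/-- Greedy SR1 updates: `τ_A(G_k) ≤ (1 - k/d) τ_A(G_0)` and `G_d = A`. -/
theorem greedy_SR1_matrix_approximation
    {d : ℕ} {A : Matrix (Fin d) (Fin d) ℝ} (hA : A.PosDef) (hAsymm : A.IsSymm)
    {G₀ : Matrix (Fin d) (Fin d) ℝ} (hG₀symm : G₀.IsSymm) (hG₀ : (G₀ - A).PosSemidef)
    (G : ℕ → Matrix (Fin d) (Fin d) ℝ) (i : ℕ → Fin d)
    (hGinit : G 0 = G₀)
    (hgreedy : ∀ k < d, ∀ j : Fin d, (G k - A) j j ≤ (G k - A) (i k) (i k))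
    (hGrec : ∀ k < d, G (k + 1) = SR1 (G k) A (Pi.single (i k) 1)) :
    (∀ k ≤ d, (G k - A).PosSemidef ∧ tauA A (G k) ≤ (1 - (k : ℝ) / d) * tauA A G₀) ∧
      G d = A :=
  greedy_SR1_matrix_approximation_general hG₀ G i hGinit hgreedy hGrec
end

section
/- Let ν be a probability measure on ℝ^d with ν({0}) = 0 that is invariant under every orthogonal linear map of ℝ^d (i.e. the pushforward of ν by any orthogonal transformation equals ν). Let R be a real symmetric positive semidefinite d×d matrix of rank r with r ≥ 1. Then ∫ (uᵀ R² u)/(uᵀ R u) · 1_{\{u : Ru ≠ 0\}}(u) dν(u) ≥ tr(R)/r. -/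
/-!
Diagonalise `R = U D Uᵀ` with `D = diagonal c`, `c ≥ 0`, `U` orthogonal. Orthogonal invariance of
`ν` replaces `u` by `Uᵀ u`, so one may assume `R = D`. Let `S` be the support of `c`, so `#S = r`,
and `P v = ∑ i ∈ S, v i ^ 2`. By Cauchy–Schwarz, `vᵀD²v / vᵀDv ≥ ∑ i ∈ S, c i * v i ^ 2 / P v`.
Coordinate swaps are orthogonal, so the integrals of `v i ^ 2 / P v` agree for `i ∈ S`; they sum to
`1` because the subspace `{P = 0}` is `ν`-null. Hence each is `1 / r`, which gives the bound
`(∑ i, c i) / r = tr R / r`.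

Coordinate subspaces `{v | ∀ i ∈ T, v i = 0}` with `T` nonempty are `ν`-null by induction on `Tᶜ`,
starting from `ν {0} = 0`: for `i ∈ T`, `j ∉ T`, Householder reflections in the `(i, j)`-plane
carry this subspace to infinitely many subspaces of the same measure that pairwise meet inside the
subspace for `insert j T`, and a finite measure forces their common measure to vanish.
-/

open Matrix MeasureTheory Finset

open scoped ENNReal in
theorem measure_eq_zero_of_pairwise_aedisjoint {α : Type*} [MeasurableSpace α] {μ : Measure α}
    [IsFiniteMeasure μ] {L : ℕ → Set α} {m : ℝ≥0∞} (hL : ∀ k, NullMeasurableSet (L k) μ)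
    (hdisj : Pairwise (Function.onFun (AEDisjoint μ) L)) (hm : ∀ k, μ (L k) = m) : m = 0 := by
  by_contra hm0
  have := tsum_meas_le_meas_iUnion_of_disjoint₀ μ hL hdisj
  simp only [hm, ENNReal.tsum_const_eq_top_of_ne_zero hm0, top_le_iff] at this
  exact measure_ne_top μ _ this

variable {n : Type*}

def vanishingSet (T : Finset n) : Set (n → ℝ) :=
  {v | ∀ i ∈ T, v i = 0}

theorem measurableSet_vanishingSet (T : Finset n) : MeasurableSet (vanishingSet T) := by
  have : vanishingSet T = ⋂ i ∈ T, {v : n → ℝ | v i = 0} := by ext; simp [vanishingSet]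
  rw [this]
  exact T.measurableSet_biInter fun i _ =>
    measurableSet_eq_fun (measurable_pi_apply i) measurable_const

section

variable {S : Finset n} {c : n → ℝ}

theorem sum_mul_sq_div_le (hc : ∀ i ∈ S, 0 ≤ c i) (v : n → ℝ) :
    (∑ i ∈ S, c i * v i ^ 2) / ∑ i ∈ S, v i ^ 2 ≤
      (∑ i ∈ S, c i ^ 2 * v i ^ 2) / ∑ i ∈ S, c i * v i ^ 2 := by
  have hCS : (∑ i ∈ S, c i * v i ^ 2) ^ 2 ≤
      (∑ i ∈ S, c i ^ 2 * v i ^ 2) * ∑ i ∈ S, v i ^ 2 := by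
    simpa only [mul_pow, mul_assoc, ← sq] using sum_mul_sq_le_sq_mul_sq S (fun i => c i * v i) v
  rcases (sum_nonneg fun i hi => mul_nonneg (hc i hi) (sq_nonneg (v i))).eq_or_lt with hN | hN
  · simp [← hN] -- both sides are `0`, the right one since `x / 0 = 0`
  · have hP : 0 < ∑ i ∈ S, v i ^ 2 := (sum_nonneg fun i _ => sq_nonneg (v i)).lt_of_ne
      fun hP => by rw [← hP, mul_zero] at hCS; nlinarith
    rw [div_le_div_iff₀ hP hN]
    nlinarith

theorem sum_sq_mul_div_le (hc : ∀ i ∈ S, 0 ≤ c i) (v : n → ℝ) :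
    (∑ i ∈ S, c i ^ 2 * v i ^ 2) / ∑ i ∈ S, c i * v i ^ 2 ≤ ∑ i ∈ S, c i := by
  refine div_le_of_le_mul₀ (sum_nonneg fun i hi => mul_nonneg (hc i hi) (sq_nonneg (v i)))
    (sum_nonneg hc) ?_
  rw [mul_sum]
  refine sum_le_sum fun i hi => ?_
  rw [sq, mul_assoc]
  exact mul_le_mul_of_nonneg_right (single_le_sum hc hi) (mul_nonneg (hc i hi) (sq_nonneg (v i)))

theorem integrable_sq_div_sum_sq {ν : Measure (n → ℝ)} [IsFiniteMeasure ν] {i : n} (hi : i ∈ S) :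
    Integrable (fun v => v i ^ 2 / ∑ k ∈ S, v k ^ 2) ν := by
  refine Integrable.of_bound (Measurable.aestronglyMeasurable (by fun_prop)) 1
    (ae_of_all _ fun v => ?_)
  have hP := sum_nonneg fun k (_ : k ∈ S) => sq_nonneg (v k)
  rw [Real.norm_of_nonneg (by positivity)]
  exact div_le_one_of_le₀ (single_le_sum (fun k _ => sq_nonneg (v k)) hi) hP

end

variable [Fintype n]

theorem vanishingSet_univ : vanishingSet (univ : Finset n) = {0} := by
  ext v
  simp [vanishingSet, funext_iff]

noncomputable def quadFormRatio (A : Matrix n n ℝ) (u : n → ℝ) : ℝ :=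
  (u ⬝ᵥ ((A * A) *ᵥ u)) / (u ⬝ᵥ (A *ᵥ u))

theorem measurable_quadFormRatio (A : Matrix n n ℝ) : Measurable (quadFormRatio A) := by
  unfold quadFormRatio
  fun_prop

theorem indicator_quadFormRatio (A : Matrix n n ℝ) :
    {u | A *ᵥ u ≠ 0}.indicator (quadFormRatio A) = quadFormRatio A := by
  refine Set.indicator_eq_self.2 fun u hu hAu => hu ?_
  rw [quadFormRatio, ← mulVec_mulVec, hAu, mulVec_zero, dotProduct_zero, zero_div]

variable [DecidableEq n]

theorem quadFormRatio_conj {U : Matrix n n ℝ} (hU : Uᵀ * U = 1) (A : Matrix n n ℝ) (u : n → ℝ) :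
    quadFormRatio (U * A * Uᵀ) u = quadFormRatio A (Uᵀ *ᵥ u) := by
  have hconj (B : Matrix n n ℝ) : u ⬝ᵥ ((U * B * Uᵀ) *ᵥ u) = (Uᵀ *ᵥ u) ⬝ᵥ (B *ᵥ (Uᵀ *ᵥ u)) := by
    rw [mul_assoc, ← mulVec_mulVec, dotProduct_mulVec, ← mulVec_transpose, mulVec_mulVec]
  have hsq : U * A * Uᵀ * (U * A * Uᵀ) = U * (A * A) * Uᵀ := by
    calc U * A * Uᵀ * (U * A * Uᵀ) = U * A * (Uᵀ * U) * A * Uᵀ := by simp only [mul_assoc]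
      _ = U * (A * A) * Uᵀ := by rw [hU, mul_one, mul_assoc U A A]
  rw [quadFormRatio, quadFormRatio, hsq, hconj, hconj]

theorem quadFormRatio_diagonal {S : Finset n} {c : n → ℝ} (hcS : ∀ i ∉ S, c i = 0) (v : n → ℝ) :
    quadFormRatio (diagonal c) v = (∑ i ∈ S, c i ^ 2 * v i ^ 2) / ∑ i ∈ S, c i * v i ^ 2 := by
  have hsum (f : n → ℝ) (hf : ∀ i ∉ S, f i = 0) : ∑ i ∈ S, f i = ∑ i, f i :=
    sum_subset (subset_univ S) fun i _ hi => hf i hi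
  rw [hsum _ fun i hi => by simp [hcS i hi], hsum _ fun i hi => by simp [hcS i hi]]
  simp only [quadFormRatio, diagonal_mul_diagonal, mulVec_diagonal, dotProduct]
  congr 1 <;> exact sum_congr rfl fun i _ => by ring

noncomputable def householder (w : n → ℝ) : Matrix n n ℝ :=
  1 - (2 / (w ⬝ᵥ w)) • vecMulVec w w

theorem householder_mulVec (w v : n → ℝ) :
    householder w *ᵥ v = v - (2 * (w ⬝ᵥ v) / (w ⬝ᵥ w)) • w := by
  rw [householder, sub_mulVec, one_mulVec, smul_mulVec, vecMulVec_mulVec, op_smul_eq_smul,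
    smul_smul, dotProduct_comm, div_mul_eq_mul_div]

theorem householder_mulVec_householder_mulVec (w v : n → ℝ) :
    householder w *ᵥ (householder w *ᵥ v) = v := by
  by_cases hw : w ⬝ᵥ w = 0
  · simp [householder_mulVec, hw]
  · have hcoeff : 2 * (w ⬝ᵥ v - 2 * (w ⬝ᵥ v) / (w ⬝ᵥ w) * (w ⬝ᵥ w)) / (w ⬝ᵥ w) =
        -(2 * (w ⬝ᵥ v) / (w ⬝ᵥ w)) := by
      field_simp
      ring
    rw [householder_mulVec, householder_mulVec, dotProduct_sub, dotProduct_smul, smul_eq_mul,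
      hcoeff, neg_smul, sub_neg_eq_add, sub_add_cancel]

theorem transpose_householder (w : n → ℝ) : (householder w)ᵀ = householder w := by
  simp [householder, transpose_sub, transpose_smul]

theorem transpose_householder_mul_self (w : n → ℝ) :
    (householder w)ᵀ * householder w = 1 := by
  refine ext_of_mulVec_single fun i => ?_
  rw [transpose_householder, ← mulVec_mulVec, householder_mulVec_householder_mulVec, one_mulVec]

theorem householder_mulVec_mem_vanishingSet {T : Finset n} {i j : n} (hi : i ∈ T) (hj : j ∉ T)
    {t : ℝ} {v : n → ℝ}
    (hv : householder (Pi.single i 1 + t • Pi.single j 1) *ᵥ v ∈ vanishingSet T) :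
    (∀ k ∈ T, k ≠ i → v k = 0) ∧ (t ^ 2 - 1) * v i = 2 * t * v j := by
  have hij : i ≠ j := ne_of_mem_of_not_mem hi hj
  simp only [vanishingSet, Set.mem_ofPred_eq, householder_mulVec, add_dotProduct, smul_dotProduct,
    single_dotProduct, Pi.sub_apply, Pi.smul_apply, Pi.add_apply,
    Pi.single_apply, smul_eq_mul] at hv
  refine ⟨fun k hk hki => ?_, ?_⟩
  · simpa [hki, ne_of_mem_of_not_mem hk hj] using hv k hk
  · have h := hv i hi
    simp only [if_true, if_neg hij, if_neg hij.symm, one_mul, mul_zero, add_zero, zero_add] at h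
    have : (1 : ℝ) + t ^ 2 ≠ 0 := by positivity
    field_simp at h
    linear_combination h

def OrthogonallyInvariant (ν : Measure (n → ℝ)) : Prop :=
  ∀ Q : Matrix n n ℝ, Qᵀ * Q = 1 → Measure.map (fun v => Q *ᵥ v) ν = ν

namespace OrthogonallyInvariant

variable {ν : Measure (n → ℝ)} {Q : Matrix n n ℝ}

theorem map_mulVec (hν : OrthogonallyInvariant ν) (hQ : Qᵀ * Q = 1) :
    ν.map (Q *ᵥ ·) = ν :=
  hν Q hQ

theorem measure_preimage (hν : OrthogonallyInvariant ν) (hQ : Qᵀ * Q = 1) {s : Set (n → ℝ)}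
    (hs : MeasurableSet s) : ν ((Q *ᵥ ·) ⁻¹' s) = ν s := by
  rw [← Measure.map_apply (by fun_prop) hs, hν.map_mulVec hQ]

theorem integral_comp (hν : OrthogonallyInvariant ν) (hQ : Qᵀ * Q = 1) {f : (n → ℝ) → ℝ}
    (hf : AEStronglyMeasurable f ν) : ∫ v, f (Q *ᵥ v) ∂ν = ∫ v, f v ∂ν := by
  have hmap := hν.map_mulVec hQ
  rw [← integral_map (by fun_prop) (by rwa [hmap]), hmap]

theorem integral_comp_perm (hν : OrthogonallyInvariant ν) (σ : Equiv.Perm n)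
    {f : (n → ℝ) → ℝ} (hf : AEStronglyMeasurable f ν) : ∫ v, f (v ∘ σ) ∂ν = ∫ v, f v ∂ν := by
  simpa only [permMatrix_mulVec] using hν.integral_comp (Q := σ.permMatrix ℝ)
    (by rw [transpose_permMatrix, ← permMatrix_mul, mul_inv_cancel, permMatrix_one]) hf

section

variable [IsFiniteMeasure ν]

theorem measure_vanishingSet_eq_zero_of_insert (hν : OrthogonallyInvariant ν) {T : Finset n}
    {i j : n} (hi : i ∈ T) (hj : j ∉ T) (hnull : ν (vanishingSet (insert j T)) = 0) :
    ν (vanishingSet T) = 0 := by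
  let L (k : ℕ) : Set (n → ℝ) :=
    (householder (Pi.single i 1 + (k : ℝ) • Pi.single j 1) *ᵥ ·) ⁻¹' vanishingSet T
  have hinter {k l : ℕ} (hkl : k ≠ l) : L k ∩ L l ⊆ vanishingSet (insert j T) := by
    rintro v ⟨hk, hl⟩
    obtain ⟨hT, hvk⟩ := householder_mulVec_mem_vanishingSet hi hj hk
    obtain ⟨-, hvl⟩ := householder_mulVec_mem_vanishingSet hi hj hl
    have hkl' : (k : ℝ) - l ≠ 0 := sub_ne_zero.2 (Nat.cast_injective.ne hkl)
    have hvi : v i = 0 := by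
      have : ((k : ℝ) - l) * (k * l + 1) * v i = 0 := by linear_combination l * hvk - k * hvl
      have hkl1 : (k : ℝ) * l + 1 ≠ 0 := by positivity
      simpa [hkl', hkl1] using this
    have hvj : v j = 0 := by
      have : ((k : ℝ) - l) * v j = 0 := by
        linear_combination (hvl - hvk) / 2 + (k ^ 2 - l ^ 2) / 2 * hvi
      simpa [hkl'] using this
    intro k hk
    rcases mem_insert.1 hk with rfl | hk
    · exact hvj
    · by_cases hki : k = i
      · rwa [hki]
      · exact hT k hk hki
  refine measure_eq_zero_of_pairwise_aedisjoint (L := L)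
    (fun k => (measurableSet_vanishingSet T).preimage (by fun_prop) |>.nullMeasurableSet)
    (fun k l hkl => measure_mono_null (hinter hkl) hnull)
    (fun k => hν.measure_preimage (transpose_householder_mul_self _) (measurableSet_vanishingSet T))

theorem measure_vanishingSet_eq_zero (hν : OrthogonallyInvariant ν) (h0 : ν {0} = 0)
    {T : Finset n} (hT : T.Nonempty) : ν (vanishingSet T) = 0 := by
  suffices ∀ U : Finset n, Uᶜ.Nonempty → ν (vanishingSet Uᶜ) = 0 by
    simpa using this Tᶜ (by simpa using hT)
  intro U
  induction U using Finset.induction_on with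
  | empty => simpa [vanishingSet_univ] using fun _ => h0
  | insert j U hjU ih =>
    rintro ⟨i, hi⟩
    refine hν.measure_vanishingSet_eq_zero_of_insert hi
      (fun h => mem_compl.1 h (mem_insert_self j U)) ?_
    rw [compl_insert, insert_erase (mem_compl.2 hjU)]
    exact ih ⟨j, mem_compl.2 hjU⟩

end

section

variable [IsProbabilityMeasure ν] {S : Finset n}

theorem integral_sq_div_sum_sq (hν : OrthogonallyInvariant ν) (h0 : ν {0} = 0) {i : n}
    (hi : i ∈ S) : ∫ v, v i ^ 2 / ∑ k ∈ S, v k ^ 2 ∂ν = (#S : ℝ)⁻¹ := by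
  have hswap {j : n} (hj : j ∈ S) :
      ∫ v, v j ^ 2 / ∑ k ∈ S, v k ^ 2 ∂ν = ∫ v, v i ^ 2 / ∑ k ∈ S, v k ^ 2 ∂ν := by
    have hsupp : {a | Equiv.swap i j a ≠ a} ⊆ S := fun a ha => by
      rcases (Equiv.swap_apply_ne_self_iff.1 ha).2 with rfl | rfl <;> assumption
    conv_rhs => rw [← hν.integral_comp_perm (Equiv.swap i j)
      (Measurable.aestronglyMeasurable (by fun_prop))]
    simp only [Function.comp_apply, Equiv.swap_apply_left,
      (Equiv.swap i j).sum_comp S (fun k => _ ^ 2) hsupp]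
  have hsum : ∑ j ∈ S, ∫ v, v j ^ 2 / ∑ k ∈ S, v k ^ 2 ∂ν = 1 := by
    have hnull := hν.measure_vanishingSet_eq_zero h0 ⟨i, hi⟩
    have hae : (fun v => ∑ j ∈ S, v j ^ 2 / ∑ k ∈ S, v k ^ 2) =ᵐ[ν] fun _ => 1 := by
      filter_upwards [measure_eq_zero_iff_ae_notMem.1 hnull] with v hv
      rw [← sum_div, div_self]
      intro hP
      exact hv fun k hk => pow_eq_zero_iff two_ne_zero |>.1 <|
        (sum_eq_zero_iff_of_nonneg fun k _ => sq_nonneg (v k)).1 hP k hk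
    rw [← integral_finsetSum S fun j hj => integrable_sq_div_sum_sq hj, integral_congr_ae hae]
    simp
  rw [sum_congr rfl fun j hj => hswap hj, sum_const, nsmul_eq_mul] at hsum
  exact eq_inv_of_mul_eq_one_right hsum

theorem sum_div_card_le_integral_quadFormRatio_diagonal (hν : OrthogonallyInvariant ν)
    (h0 : ν {0} = 0) {c : n → ℝ} (hc : ∀ i, 0 ≤ c i)
    (hcS : ∀ i ∉ S, c i = 0) :
    (∑ i, c i) / #S ≤ ∫ v, quadFormRatio (diagonal c) v ∂ν := by
  have hint : Integrable (quadFormRatio (diagonal c)) ν := by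
    refine Integrable.of_bound (measurable_quadFormRatio _).aestronglyMeasurable (∑ i ∈ S, c i)
      (ae_of_all _ fun v => ?_)
    have hN := sum_nonneg fun i (_ : i ∈ S) => mul_nonneg (hc i) (sq_nonneg (v i))
    rw [quadFormRatio_diagonal hcS, Real.norm_of_nonneg (div_nonneg (by positivity) hN)]
    exact sum_sq_mul_div_le (fun i _ => hc i) v
  calc (∑ i, c i) / #S = ∑ j ∈ S, c j * ∫ v, v j ^ 2 / ∑ k ∈ S, v k ^ 2 ∂ν := by
        rw [← sum_subset (subset_univ S) fun j _ hj => hcS j hj, sum_div]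
        exact sum_congr rfl fun j hj => by rw [hν.integral_sq_div_sum_sq h0 hj, div_eq_mul_inv]
    _ = ∫ v, (∑ j ∈ S, c j * v j ^ 2) / ∑ k ∈ S, v k ^ 2 ∂ν := by
        simp_rw [sum_div, mul_div_assoc]
        rw [integral_finsetSum S fun j hj => (integrable_sq_div_sum_sq hj).const_mul (c j)]
        simp_rw [integral_const_mul]
    _ ≤ ∫ v, quadFormRatio (diagonal c) v ∂ν := by
        refine integral_mono ?_ hint fun v => ?_
        · simp_rw [sum_div, mul_div_assoc]
          exact integrable_finsetSum S fun j hj => (integrable_sq_div_sum_sq hj).const_mul (c j)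
        · rw [quadFormRatio_diagonal hcS]
          exact sum_mul_sq_div_le (fun i _ => hc i) v

end

end OrthogonallyInvariant

theorem Matrix.IsHermitian.transpose_eigenvectorUnitary_mul_self {A : Matrix n n ℝ}
    (hA : A.IsHermitian) :
    (hA.eigenvectorUnitary : Matrix n n ℝ)ᵀ * hA.eigenvectorUnitary = 1 := by
  simpa [star_eq_conjTranspose, conjTranspose_eq_transpose_of_trivial] using
    Unitary.coe_star_mul_self hA.eigenvectorUnitary

theorem Matrix.IsHermitian.eq_eigenvectorUnitary_mul_diagonal_mul_transpose {A : Matrix n n ℝ}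
    (hA : A.IsHermitian) :
    A = hA.eigenvectorUnitary * diagonal hA.eigenvalues *
      (hA.eigenvectorUnitary : Matrix n n ℝ)ᵀ := by
  conv_lhs => rw [hA.spectral_theorem]
  simp [star_eq_conjTranspose, conjTranspose_eq_transpose_of_trivial]

theorem random_SR1_expected_progress_general
    {d : ℕ} (ν : Measure (Fin d → ℝ)) [IsProbabilityMeasure ν]
    (hν0 : ν {0} = 0)
    (hinv : ∀ Q : Matrix (Fin d) (Fin d) ℝ, Qᵀ * Q = 1 →
      Measure.map (fun v => Q *ᵥ v) ν = ν)
    {R : Matrix (Fin d) (Fin d) ℝ} (hR : R.PosSemidef)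
    {r : ℕ} (hrank : R.rank = r) :
    R.trace / r ≤
      ∫ u, Set.indicator {u : Fin d → ℝ | R *ᵥ u ≠ 0}
        (fun u => (u ⬝ᵥ ((R * R) *ᵥ u)) / (u ⬝ᵥ (R *ᵥ u))) u ∂ν := by
  have hH := hR.isHermitian
  set U : Matrix (Fin d) (Fin d) ℝ := (hH.eigenvectorUnitary : Matrix (Fin d) (Fin d) ℝ)
  have hU : Uᵀ * U = 1 := hH.transpose_eigenvectorUnitary_mul_self
  have htrace : R.trace = ∑ i, hH.eigenvalues i := by simpa using hH.trace_eq_sum_eigenvalues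
  have hcard : r = #{i | hH.eigenvalues i ≠ 0} := by
    rw [← hrank, hH.rank_eq_card_non_zero_eigs, Fintype.card_subtype]
  have hintegrand : {u | R *ᵥ u ≠ 0}.indicator (quadFormRatio R) =
      fun u => quadFormRatio (diagonal hH.eigenvalues) (Uᵀ *ᵥ u) := by
    rw [indicator_quadFormRatio]
    conv_lhs => rw [hH.eq_eigenvectorUnitary_mul_diagonal_mul_transpose]
    exact funext (quadFormRatio_conj hU _)
  change _ ≤ ∫ u, {u | R *ᵥ u ≠ 0}.indicator (quadFormRatio R) u ∂ν
  rw [hintegrand, OrthogonallyInvariant.integral_comp hinv (by rw [transpose_transpose,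
    mul_eq_one_comm, hU]) (measurable_quadFormRatio _).aestronglyMeasurable, htrace, hcard]
  exact OrthogonallyInvariant.sum_div_card_le_integral_quadFormRatio_diagonal hinv hν0
    hR.eigenvalues_nonneg fun i hi => by simpa using hi

/-- For a rotation-invariant probability measure `ν` on `ℝ^d` with `ν {0} = 0`
and a PSD matrix `R` of rank `r ≥ 1`,
`∫ (uᵀR²u)/(uᵀRu) · 1_{Ru ≠ 0}(u) dν(u) ≥ tr(R)/r`. -/
theorem random_SR1_expected_progress
    {d : ℕ} (ν : Measure (Fin d → ℝ)) [IsProbabilityMeasure ν]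
    (hν0 : ν {0} = 0)
    (hinv : ∀ Q : Matrix (Fin d) (Fin d) ℝ, Qᵀ * Q = 1 →
      Measure.map (fun v => Q *ᵥ v) ν = ν)
    {R : Matrix (Fin d) (Fin d) ℝ} (hR : R.PosSemidef)
    {r : ℕ} (hrank : R.rank = r) (hr : 1 ≤ r) :
    R.trace / r ≤
      ∫ u, Set.indicator {u : Fin d → ℝ | R *ᵥ u ≠ 0}
        (fun u => (u ⬝ᵥ ((R * R) *ᵥ u)) / (u ⬝ᵥ (R *ᵥ u))) u ∂ν :=
  random_SR1_expected_progress_general ν hν0 hinv hR hrank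
end

section
/- Let A be a positive definite symmetric d×d real matrix and G_0 a symmetric matrix with G_0 ⪰ A. Suppose sequences (G_k), (L_k), (ũ_k) satisfy for every k ≥ 0: L_k is an invertible d×d matrix with L_kᵀ L_k = G_k⁻¹; ũ_k is a standard basis vector maximizing eᵀ L_k⁻ᵀ A⁻¹ L_k⁻¹ e over e ∈ {e_1, …, e_d}; and G_{k+1} := BFGS(G_k, A, L_kᵀ ũ_k). Then for every k ≥ 0: G_k ⪰ A and σ_A(G_k) ≤ (1 − 1/d)^k · σ_A(G_0). -/
/-!
The update keeps `A ⪯ G`: for `c = xᵀGu / uᵀGu` the quadratic form of `BFGS G A u - A` at `x`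
is that of `G - A` at `x - c u` plus a square. For the rate, write `M = L⁻ᵀ A⁻¹ L⁻¹` and take
`u = Lᵀ eᵢ`. Since `G = L⁻¹ L⁻ᵀ`, we get `uᵀGu = 1` and `(Gu)ᵀ A⁻¹ (Gu) = Mᵢᵢ`, so one step
changes `σ` into `σ + 1 - Mᵢᵢ`. Moreover `tr M = tr (G A⁻¹) = σ + d`, and the greedy choice of `i`
gives `Mᵢᵢ ≥ tr M / d = σ / d + 1`, so the new value is at most `(1 - 1/d) σ`.
-/

open Matrix

/-- The BFGS quasi-Newton update. -/
noncomputable def BFGS {d : ℕ} (G A : Matrix (Fin d) (Fin d) ℝ) (u : Fin d → ℝ) :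
    Matrix (Fin d) (Fin d) ℝ :=
  if u = 0 then G
  else G - (u ⬝ᵥ (G *ᵥ u))⁻¹ • vecMulVec (G *ᵥ u) (u ᵥ* G)
         + (u ⬝ᵥ (A *ᵥ u))⁻¹ • vecMulVec (A *ᵥ u) (u ᵥ* A)

namespace Matrix

variable {n R : Type*} [Fintype n]

section CommSemiring

variable [CommSemiring R]

lemma IsSymm.vecMul_eq_mulVec {M : Matrix n n R} (hM : M.IsSymm) (x : n → R) :
    x ᵥ* M = M *ᵥ x := by
  rw [← mulVec_transpose, hM.eq]

lemma IsSymm.dotProduct_mulVec_comm {M : Matrix n n R} (hM : M.IsSymm) (x y : n → R) :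
    x ⬝ᵥ (M *ᵥ y) = y ⬝ᵥ (M *ᵥ x) := by
  rw [← dotProduct_transpose_mulVec, hM.eq]

lemma trace_vecMulVec_mul (v w : n → R) (M : Matrix n n R) :
    (vecMulVec v w * M).trace = w ⬝ᵥ (M *ᵥ v) := by
  rw [vecMulVec_mul, trace_vecMulVec, dotProduct_comm, ← dotProduct_mulVec]

end CommSemiring

variable [CommRing R] [DecidableEq n] {G L : Matrix n n R}

lemma inv_mulVec_mulVec {A : Matrix n n R} (hA : IsUnit A.det) (x : n → R) :
    A⁻¹ *ᵥ (A *ᵥ x) = x := by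
  rw [mulVec_mulVec, nonsing_inv_mul A hA, one_mulVec]

lemma isUnit_det_of_transpose_mul_eq_inv (hG : IsUnit G.det) (hLG : Lᵀ * L = G⁻¹) :
    IsUnit L.det := by
  have h := isUnit_nonsing_inv_det G hG
  rw [← hLG, det_mul, det_transpose] at h
  exact isUnit_of_mul_isUnit_left h

lemma eq_inv_mul_inv_transpose_of_transpose_mul_eq_inv (hG : IsUnit G.det)
    (hLG : Lᵀ * L = G⁻¹) : G = L⁻¹ * L⁻¹ᵀ := by
  rw [transpose_nonsing_inv, ← mul_inv_rev, hLG, nonsing_inv_nonsing_inv G hG]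

end Matrix

section BFGS

variable {d : ℕ} {A G : Matrix (Fin d) (Fin d) ℝ} {u : Fin d → ℝ}

lemma sigmaA_eq_trace_mul_inv_sub (hA : IsUnit A.det) : sigmaA A G = (G * A⁻¹).trace - d := by
  rw [sigmaA, sub_mul, trace_sub, mul_nonsing_inv A hA, trace_one, Fintype.card_fin]

lemma BFGS_of_ne_zero (hG : G.IsSymm) (hA : A.IsSymm) (hu : u ≠ 0) :
    BFGS G A u = G - (u ⬝ᵥ (G *ᵥ u))⁻¹ • vecMulVec (G *ᵥ u) (G *ᵥ u)
      + (u ⬝ᵥ (A *ᵥ u))⁻¹ • vecMulVec (A *ᵥ u) (A *ᵥ u) := by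
  rw [BFGS, if_neg hu, hG.vecMul_eq_mulVec, hA.vecMul_eq_mulVec]

lemma isSymm_BFGS (hG : G.IsSymm) (hA : A.IsSymm) (u : Fin d → ℝ) : (BFGS G A u).IsSymm := by
  by_cases hu : u = 0
  · simpa [BFGS, hu] using hG
  rw [BFGS_of_ne_zero hG hA hu]
  have hself : ∀ v : Fin d → ℝ, (vecMulVec v v).IsSymm := fun v => transpose_vecMulVec v v
  exact (hG.sub ((hself _).smul _)).add ((hself _).smul _)

lemma dotProduct_BFGS_mulVec (hG : G.IsSymm) (hA : A.IsSymm) (hu : u ≠ 0) (x : Fin d → ℝ) :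
    x ⬝ᵥ (BFGS G A u *ᵥ x) = x ⬝ᵥ (G *ᵥ x) - (x ⬝ᵥ (G *ᵥ u)) ^ 2 / (u ⬝ᵥ (G *ᵥ u))
      + (x ⬝ᵥ (A *ᵥ u)) ^ 2 / (u ⬝ᵥ (A *ᵥ u)) := by
  rw [BFGS_of_ne_zero hG hA hu]
  simp only [add_mulVec, sub_mulVec, smul_mulVec, vecMulVec_mulVec, dotProduct_add,
    dotProduct_sub, dotProduct_smul, MulOpposite.smul_eq_mul_unop, MulOpposite.unop_op,
    smul_eq_mul]
  rw [dotProduct_comm (G *ᵥ u) x, dotProduct_comm (A *ᵥ u) x]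
  ring

theorem posSemidef_BFGS_sub (hA : A.PosDef) (hGA : (G - A).PosSemidef) (u : Fin d → ℝ) :
    (BFGS G A u - A).PosSemidef := by
  have hAs : A.IsSymm := by simpa using hA.isHermitian
  have hSs : (G - A).IsSymm := by simpa using hGA.isHermitian
  have hGs : G.IsSymm := by simpa using hSs.add hAs
  refine PosSemidef.of_dotProduct_mulVec_nonneg (by simpa using (isSymm_BFGS hGs hAs u).sub hAs)
    fun x => ?_
  rw [star_trivial]
  by_cases hu : u = 0
  · simpa [BFGS, hu] using hGA.dotProduct_mulVec_nonneg x
  have hq : 0 < u ⬝ᵥ (G *ᵥ u) := by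
    simpa using (hA.add_posSemidef hGA).dotProduct_mulVec_pos hu
  have ha : 0 < u ⬝ᵥ (A *ᵥ u) := by simpa using hA.dotProduct_mulVec_pos hu
  set c := x ⬝ᵥ (G *ᵥ u) / u ⬝ᵥ (G *ᵥ u)
  have key : x ⬝ᵥ ((BFGS G A u - A) *ᵥ x) = (x - c • u) ⬝ᵥ ((G - A) *ᵥ (x - c • u))
      + u ⬝ᵥ (A *ᵥ u) * (c - x ⬝ᵥ (A *ᵥ u) / u ⬝ᵥ (A *ᵥ u)) ^ 2 := by
    simp only [sub_mulVec, mulVec_sub, mulVec_smul, dotProduct_sub, sub_dotProduct,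
      smul_dotProduct, dotProduct_smul, smul_eq_mul, hGs.dotProduct_mulVec_comm u x,
      hAs.dotProduct_mulVec_comm u x, dotProduct_BFGS_mulVec hGs hAs hu, c]
    field_simp
    ring
  rw [key]
  exact add_nonneg (by simpa using hGA.dotProduct_mulVec_nonneg (x - c • u)) (by positivity)

lemma sigmaA_BFGS (hA : A.PosDef) (hG : G.IsSymm) (hu : u ≠ 0) :
    sigmaA A (BFGS G A u)
      = sigmaA A G + 1 - (G *ᵥ u) ⬝ᵥ (A⁻¹ *ᵥ (G *ᵥ u)) / (u ⬝ᵥ (G *ᵥ u)) := by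
  have hAdet : IsUnit A.det := hA.isUnit.map detMonoidHom
  have ha : u ⬝ᵥ (A *ᵥ u) ≠ 0 := (by simpa using hA.dotProduct_mulVec_pos hu : (0 : ℝ) < _).ne'
  rw [BFGS_of_ne_zero hG (by simpa using hA.isHermitian) hu, sigmaA, sigmaA,
    add_sub_right_comm, sub_right_comm G, add_mul, sub_mul, trace_add, trace_sub, smul_mul,
    smul_mul, trace_smul, trace_smul, trace_vecMulVec_mul, trace_vecMulVec_mul,
    inv_mulVec_mulVec hAdet, dotProduct_comm (A *ᵥ u), smul_eq_mul, smul_eq_mul,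
    inv_mul_cancel₀ ha]
  ring

theorem sigmaA_greedy_BFGS_le {L : Matrix (Fin d) (Fin d) ℝ} (hA : A.PosDef) (hG : G.PosDef)
    (hLG : Lᵀ * L = G⁻¹) {i : Fin d}
    (hi : ∀ j, (L⁻¹ᵀ * A⁻¹ * L⁻¹) j j ≤ (L⁻¹ᵀ * A⁻¹ * L⁻¹) i i) :
    sigmaA A (BFGS G A (Lᵀ *ᵥ Pi.single i 1)) ≤ (1 - 1 / d) * sigmaA A G := by
  set M := L⁻¹ᵀ * A⁻¹ * L⁻¹
  set e : Fin d → ℝ := Pi.single i 1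
  have hAdet : IsUnit A.det := hA.isUnit.map detMonoidHom
  have hGdet : IsUnit G.det := hG.isUnit.map detMonoidHom
  have hLdet := isUnit_det_of_transpose_mul_eq_inv hGdet hLG
  have hGL := eq_inv_mul_inv_transpose_of_transpose_mul_eq_inv hGdet hLG
  have hGu : G *ᵥ (Lᵀ *ᵥ e) = L⁻¹ *ᵥ e := by
    rw [hGL, mulVec_mulVec, mul_assoc, ← transpose_mul, mul_nonsing_inv L hLdet, transpose_one,
      mul_one]
  have huGu : (Lᵀ *ᵥ e) ⬝ᵥ (G *ᵥ (Lᵀ *ᵥ e)) = 1 := by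
    rw [hGu, mulVec_transpose, ← dotProduct_mulVec, mulVec_mulVec, mul_nonsing_inv L hLdet,
      one_mulVec]
    simp [e]
  have hu : Lᵀ *ᵥ e ≠ 0 := fun h => by simp [h] at huGu
  have hquad : (G *ᵥ (Lᵀ *ᵥ e)) ⬝ᵥ (A⁻¹ *ᵥ (G *ᵥ (Lᵀ *ᵥ e))) = M i i := by
    rw [hGu, dotProduct_comm, ← dotProduct_transpose_mulVec, mulVec_mulVec, mulVec_mulVec,
      single_one_dotProduct, mulVec_single_one, col_apply]
  have htrace : M.trace = sigmaA A G + d := by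
    rw [sigmaA_eq_trace_mul_inv_sub hAdet, trace_mul_cycle, ← hGL]
    ring
  have hgreedy : M.trace ≤ d * M i i := by
    calc M.trace = ∑ j, M.diag j := rfl
      _ ≤ Finset.univ.card • M i i := Finset.sum_le_card_nsmul _ _ _ fun j _ => hi j
      _ = d * M i i := by simp
  have hd : (d : ℝ) ≠ 0 := by exact_mod_cast i.pos.ne'
  have hrate : (1 - 1 / d) * sigmaA A G = sigmaA A G + 1 - M.trace / d := by
    rw [htrace]
    field_simp
    ring
  rw [sigmaA_BFGS hA (by simpa using hG.isHermitian) hu, huGu, div_one, hquad, hrate]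
  gcongr
  rwa [div_le_iff₀' (by positivity)]

end BFGS

theorem greedy_BFGS_matrix_approximation_general
    {d : ℕ} {A : Matrix (Fin d) (Fin d) ℝ} (hA : A.PosDef)
    {G₀ : Matrix (Fin d) (Fin d) ℝ} (hG₀ : (G₀ - A).PosSemidef)
    (G : ℕ → Matrix (Fin d) (Fin d) ℝ) (Lm : ℕ → Matrix (Fin d) (Fin d) ℝ) (i : ℕ → Fin d)
    (hGinit : G 0 = G₀)
    (hLG : ∀ k, (Lm k)ᵀ * Lm k = (G k)⁻¹)
    (hgreedy : ∀ k, ∀ j : Fin d,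
      Pi.single j 1 ⬝ᵥ ((((Lm k)⁻¹)ᵀ * A⁻¹ * (Lm k)⁻¹) *ᵥ Pi.single j 1) ≤
        Pi.single (i k) 1 ⬝ᵥ ((((Lm k)⁻¹)ᵀ * A⁻¹ * (Lm k)⁻¹) *ᵥ Pi.single (i k) 1))
    (hGrec : ∀ k, G (k + 1) = BFGS (G k) A ((Lm k)ᵀ *ᵥ Pi.single (i k) 1)) :
    ∀ k : ℕ, (G k - A).PosSemidef ∧
      sigmaA A (G k) ≤ (1 - 1 / (d : ℝ)) ^ k * sigmaA A G₀ := by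
  have hrate : 0 ≤ 1 - 1 / (d : ℝ) :=
    sub_nonneg.2 (div_le_one_of_le₀ (by exact_mod_cast (i 0).pos) d.cast_nonneg)
  intro k
  induction k with
  | zero => simpa [hGinit] using hG₀
  | succ k ih =>
    obtain ⟨hGA, hσ⟩ := ih
    have hdiag : ∀ j, ((Lm k)⁻¹ᵀ * A⁻¹ * (Lm k)⁻¹) j j
        ≤ ((Lm k)⁻¹ᵀ * A⁻¹ * (Lm k)⁻¹) (i k) (i k) := fun j => by
      simpa [mulVec_single_one] using hgreedy k j
    have hG : (G k).PosDef := by simpa using hA.add_posSemidef hGA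
    refine ⟨hGrec k ▸ posSemidef_BFGS_sub hA hGA _, ?_⟩
    calc sigmaA A (G (k + 1)) ≤ (1 - 1 / (d : ℝ)) * sigmaA A (G k) :=
          hGrec k ▸ sigmaA_greedy_BFGS_le hA hG (hLG k) hdiag
      _ ≤ (1 - 1 / (d : ℝ)) * ((1 - 1 / (d : ℝ)) ^ k * sigmaA A G₀) :=
          mul_le_mul_of_nonneg_left hσ hrate
      _ = (1 - 1 / (d : ℝ)) ^ (k + 1) * sigmaA A G₀ := by ring

/-- Greedy scaled BFGS updates:
`σ_A(G_k) ≤ (1 - 1/d)^k σ_A(G_0)`. -/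
theorem greedy_BFGS_matrix_approximation
    {d : ℕ} {A : Matrix (Fin d) (Fin d) ℝ} (hA : A.PosDef) (hAsymm : A.IsSymm)
    {G₀ : Matrix (Fin d) (Fin d) ℝ} (hG₀symm : G₀.IsSymm) (hG₀ : (G₀ - A).PosSemidef)
    (G : ℕ → Matrix (Fin d) (Fin d) ℝ) (Lm : ℕ → Matrix (Fin d) (Fin d) ℝ) (i : ℕ → Fin d)
    (hGinit : G 0 = G₀)
    (hLinv : ∀ k, IsUnit (Lm k))
    (hLG : ∀ k, (Lm k)ᵀ * Lm k = (G k)⁻¹)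
    (hgreedy : ∀ k, ∀ j : Fin d,
      Pi.single j 1 ⬝ᵥ ((((Lm k)⁻¹)ᵀ * A⁻¹ * (Lm k)⁻¹) *ᵥ Pi.single j 1) ≤
        Pi.single (i k) 1 ⬝ᵥ ((((Lm k)⁻¹)ᵀ * A⁻¹ * (Lm k)⁻¹) *ᵥ Pi.single (i k) 1))
    (hGrec : ∀ k, G (k + 1) = BFGS (G k) A ((Lm k)ᵀ *ᵥ Pi.single (i k) 1)) :
    ∀ k : ℕ, (G k - A).PosSemidef ∧
      sigmaA A (G k) ≤ (1 - 1 / (d : ℝ)) ^ k * sigmaA A G₀ :=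
  greedy_BFGS_matrix_approximation_general hA hG₀ G Lm i hGinit hLG hgreedy hGrec
end

section
/- Let A, G be positive definite symmetric d×d real matrices, let L be an invertible d×d matrix with Lᵀ L = G⁻¹, let ũ ∈ ℝ^d with ũ ≠ 0, and set u := Lᵀ ũ, v := (sqrt(uᵀ A u)/‖ũ‖) · ũ, and L' := L − ((L A u − v) uᵀ)/(uᵀ A u). Then BFGS(G, A, u) is invertible and L'ᵀ L' = (BFGS(G, A, u))⁻¹. -/
/-!
Put `P = 1 - (A u) uᵀ / (uᵀ A u)`, so that `uᵀ P = 0` and `L' = L P + v uᵀ / (uᵀ A u)`. Since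
`Lᵀ v` is a multiple of `u` and `vᵀ v = uᵀ A u`, the cross terms of `L'ᵀ L'` vanish and
`L'ᵀ L' = Pᵀ G⁻¹ P + u uᵀ / (uᵀ A u)`, the classical inverse BFGS update. Multiplying it by
`BFGS(G, A, u)` gives the identity, using `BFGS(G, A, u) u = A u`.
-/

open Matrix

namespace Matrix

variable {n K : Type*} [Fintype n] [DecidableEq n] [Field K]

/-- The projection onto the hyperplane `sᗮ` along `y`. -/
noncomputable def obliqueProj (s y : n → K) : Matrix n n K :=
  1 - (s ⬝ᵥ y)⁻¹ • vecMulVec y s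

theorem vecMul_obliqueProj_self {s y : n → K} (h : s ⬝ᵥ y ≠ 0) :
    s ᵥ* obliqueProj s y = 0 := by
  rw [obliqueProj, vecMul_sub, vecMul_one, vecMul_smul, vecMul_vecMulVec, smul_smul,
    inv_mul_cancel₀ h, one_smul, sub_self]

theorem obliqueProj_add_smul_vecMulVec (s y : n → K) :
    obliqueProj s y + (s ⬝ᵥ y)⁻¹ • vecMulVec y s = 1 :=
  sub_add_cancel _ _

theorem transpose_mul_obliqueProj_mul_vecMulVec {L : Matrix n n K} {s y v : n → K} {c : K}
    (h : s ⬝ᵥ y ≠ 0) (hv : Lᵀ *ᵥ v = c • s) :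
    (L * obliqueProj s y)ᵀ * vecMulVec v s = 0 := by
  rw [transpose_mul, Matrix.mul_assoc, mul_vecMulVec, mul_vecMulVec, hv, mulVec_smul,
    mulVec_transpose, vecMul_obliqueProj_self h, smul_zero, zero_vecMulVec]

theorem transpose_mul_self_sub_smul_vecMulVec {L : Matrix n n K} {s y v : n → K} {c : K}
    (h : s ⬝ᵥ y ≠ 0) (hv : Lᵀ *ᵥ v = c • s) (hvv : v ⬝ᵥ v = s ⬝ᵥ y) :
    (L - (s ⬝ᵥ y)⁻¹ • vecMulVec (L *ᵥ y - v) s)ᵀ * (L - (s ⬝ᵥ y)⁻¹ • vecMulVec (L *ᵥ y - v) s)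
      = (obliqueProj s y)ᵀ * (Lᵀ * L) * obliqueProj s y + (s ⬝ᵥ y)⁻¹ • vecMulVec s s := by
  have hL : L - (s ⬝ᵥ y)⁻¹ • vecMulVec (L *ᵥ y - v) s
      = L * obliqueProj s y + (s ⬝ᵥ y)⁻¹ • vecMulVec v s := by
    rw [obliqueProj, Matrix.mul_sub, Matrix.mul_one, Matrix.mul_smul, mul_vecMulVec,
      sub_vecMulVec, smul_sub]
    abel
  have hcross := transpose_mul_obliqueProj_mul_vecMulVec (y := y) h hv
  have hcross' : (vecMulVec v s)ᵀ * (L * obliqueProj s y) = 0 := by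
    rw [← transpose_transpose (L * obliqueProj s y), ← transpose_mul, hcross, transpose_zero]
  rw [hL, transpose_add, transpose_smul, add_mul, mul_add, mul_add, Matrix.mul_smul, hcross,
    Matrix.smul_mul, hcross', Matrix.smul_mul, Matrix.mul_smul, transpose_vecMulVec,
    vecMulVec_mul_vecMulVec, hvv, vecMulVec_smul, smul_smul, smul_smul, inv_mul_cancel_right₀ h,
    smul_zero, add_zero, zero_add, transpose_mul]
  simp only [Matrix.mul_assoc]

end Matrix

theorem dotProduct_self_smul_sqrt_div {n : Type*} [Fintype n] {w : n → ℝ} (hw : w ≠ 0) {t : ℝ}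
    (ht : 0 ≤ t) : ((√t / √(w ⬝ᵥ w)) • w) ⬝ᵥ ((√t / √(w ⬝ᵥ w)) • w) = t := by
  have hww : 0 < w ⬝ᵥ w := by simpa using dotProduct_star_self_pos_iff.mpr hw
  rw [smul_dotProduct, dotProduct_smul, smul_smul, smul_eq_mul, ← sq, div_pow, Real.sq_sqrt ht,
    Real.sq_sqrt hww.le, div_mul_cancel₀ _ hww.ne']

section BFGS

variable {d : ℕ} {G H A : Matrix (Fin d) (Fin d) ℝ} {u : Fin d → ℝ}

theorem BFGS_mulVec_self (ha : u ⬝ᵥ (A *ᵥ u) ≠ 0) (hb : u ⬝ᵥ (G *ᵥ u) ≠ 0) :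
    BFGS G A u *ᵥ u = A *ᵥ u := by
  have hu : u ≠ 0 := by rintro rfl; simp at ha
  rw [BFGS, if_neg hu, add_mulVec, sub_mulVec, smul_mulVec, smul_mulVec, vecMulVec_mulVec,
    vecMulVec_mulVec, ← dotProduct_mulVec, ← dotProduct_mulVec, op_smul_eq_smul, op_smul_eq_smul,
    smul_smul, smul_smul, inv_mul_cancel₀ ha, inv_mul_cancel₀ hb, one_smul, one_smul, sub_self,
    zero_add]

theorem BFGS_mul_transpose_obliqueProj (hA : Aᵀ = A) (ha : u ⬝ᵥ (A *ᵥ u) ≠ 0)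
    (hb : u ⬝ᵥ (G *ᵥ u) ≠ 0) :
    BFGS G A u * (obliqueProj u (A *ᵥ u))ᵀ
      = G - (u ⬝ᵥ (G *ᵥ u))⁻¹ • vecMulVec (G *ᵥ u) (u ᵥ* G) := by
  have hu : u ≠ 0 := by rintro rfl; simp at ha
  have hAu : u ᵥ* A = A *ᵥ u := by rw [← mulVec_transpose, hA]
  rw [obliqueProj, transpose_sub, transpose_one, transpose_smul, transpose_vecMulVec,
    Matrix.mul_sub, Matrix.mul_one, Matrix.mul_smul, mul_vecMulVec, BFGS_mulVec_self ha hb, BFGS,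
    if_neg hu, hAu]
  abel

theorem BFGS_mul_inverse_eq_one (hA : Aᵀ = A) (hGH : G * H = 1) (ha : u ⬝ᵥ (A *ᵥ u) ≠ 0)
    (hb : u ⬝ᵥ (G *ᵥ u) ≠ 0) :
    BFGS G A u * ((obliqueProj u (A *ᵥ u))ᵀ * H * obliqueProj u (A *ᵥ u)
      + (u ⬝ᵥ (A *ᵥ u))⁻¹ • vecMulVec u u) = 1 := by
  have hGu : u ᵥ* G ᵥ* H = u := by rw [vecMul_vecMul, hGH, vecMul_one]
  calc _ = (G - (u ⬝ᵥ (G *ᵥ u))⁻¹ • vecMulVec (G *ᵥ u) (u ᵥ* G)) * H * obliqueProj u (A *ᵥ u)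
        + (u ⬝ᵥ (A *ᵥ u))⁻¹ • vecMulVec (A *ᵥ u) u := by
        rw [Matrix.mul_add, ← Matrix.mul_assoc, ← Matrix.mul_assoc,
          BFGS_mul_transpose_obliqueProj hA ha hb, Matrix.mul_smul, mul_vecMulVec,
          BFGS_mulVec_self ha hb]
    _ = obliqueProj u (A *ᵥ u) + (u ⬝ᵥ (A *ᵥ u))⁻¹ • vecMulVec (A *ᵥ u) u := by
        rw [Matrix.sub_mul, Matrix.sub_mul, hGH, Matrix.smul_mul, Matrix.smul_mul, vecMulVec_mul,
          vecMulVec_mul, hGu, vecMul_obliqueProj_self ha, vecMulVec_zero, smul_zero, sub_zero,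
          Matrix.one_mul]
    _ = 1 := obliqueProj_add_smul_vecMulVec _ _

end BFGS

theorem BFGS_factor_update_general
    {d : ℕ} {A G : Matrix (Fin d) (Fin d) ℝ} (hA : A.PosDef) (hG : G.PosDef)
    {L : Matrix (Fin d) (Fin d) ℝ} (hLG : Lᵀ * L = G⁻¹)
    {w : Fin d → ℝ} (hw : w ≠ 0) :
    let u := Lᵀ *ᵥ w
    let v := (Real.sqrt (u ⬝ᵥ (A *ᵥ u)) / Real.sqrt (w ⬝ᵥ w)) • w
    let L' := L - (u ⬝ᵥ (A *ᵥ u))⁻¹ • vecMulVec ((L * A) *ᵥ u - v) u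
    IsUnit (BFGS G A u) ∧ L'ᵀ * L' = (BFGS G A u)⁻¹ := by
  intro u v L'
  have hdet : IsUnit G.det := (isUnit_iff_isUnit_det G).mp hG.isUnit
  have hu : u ≠ 0 := by
    have hLt : Lᵀ * (L * G) = 1 := by rw [← Matrix.mul_assoc, hLG, nonsing_inv_mul G hdet]
    exact ((mulVec_injective_of_isUnit ((isUnit_iff_isUnit_det _).2
      (isUnit_det_of_right_inverse hLt))).ne_iff' (mulVec_zero _)).2 hw
  have ha : 0 < u ⬝ᵥ (A *ᵥ u) := by simpa using hA.dotProduct_mulVec_pos hu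
  have hb : 0 < u ⬝ᵥ (G *ᵥ u) := by simpa using hG.dotProduct_mulVec_pos hu
  have hinv : BFGS G A u * (L'ᵀ * L') = 1 := by
    have hL' : L' = L - (u ⬝ᵥ (A *ᵥ u))⁻¹ • vecMulVec (L *ᵥ (A *ᵥ u) - v) u := by
      rw [mulVec_mulVec u L A]
    rw [hL', transpose_mul_self_sub_smul_vecMulVec ha.ne' (mulVec_smul _ _ _)
      (dotProduct_self_smul_sqrt_div hw ha.le), hLG]
    exact BFGS_mul_inverse_eq_one hA.1 (mul_nonsing_inv G hdet) ha.ne' hb.ne'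
  exact ⟨(isUnit_iff_isUnit_det _).2 (isUnit_det_of_right_inverse hinv),
    (inv_eq_right_inv hinv).symm⟩

/-- Cholesky-type factor update for the inverse BFGS matrix:
with `u = Lᵀũ`, `v = (√(uᵀAu)/‖ũ‖) ũ`, and `L' = L − (LAu − v)uᵀ/(uᵀAu)`,
the update `BFGS(G,A,u)` is invertible and `L'ᵀL' = (BFGS(G,A,u))⁻¹`. -/
theorem BFGS_factor_update
    {d : ℕ} {A G : Matrix (Fin d) (Fin d) ℝ} (hA : A.PosDef) (hG : G.PosDef)
    {L : Matrix (Fin d) (Fin d) ℝ} (hL : IsUnit L) (hLG : Lᵀ * L = G⁻¹)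
    {w : Fin d → ℝ} (hw : w ≠ 0) :
    let u := Lᵀ *ᵥ w
    let v := (Real.sqrt (u ⬝ᵥ (A *ᵥ u)) / Real.sqrt (w ⬝ᵥ w)) • w
    let L' := L - (u ⬝ᵥ (A *ᵥ u))⁻¹ • vecMulVec ((L * A) *ᵥ u - v) u
    IsUnit (BFGS G A u) ∧ L'ᵀ * L' = (BFGS G A u)⁻¹ :=
  BFGS_factor_update_general hA hG hLG hw
end

section
/- Let (Ω, P) be a probability space, let (X_k)_{k∈ℕ} be a sequence of nonnegative measurable real-valued random variables, and let a > 0 and t > 1 be reals such that E[X_k] ≤ a·(1 − 1/t)^k for every k ≥ 0. Then for every δ ∈ (0,1), with probability at least 1 − δ it holds that X_k ≤ (a·t²/δ)·(1 − 1/(t+1))^k for all k ≥ 0 simultaneously. -/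
open MeasureTheory

/-! Markov's inequality bounds `P(X_k > M_k)` by `E[X_k] / M_k`. Choosing the thresholds
`M_k = (a t² / δ) (1 - 1/(t+1))^k` makes these bounds `δ q (1 - q)^k` with `q = 1/t²`, because
`(1 - 1/t) = (1 - 1/t²)(1 - 1/(t+1))`; they sum to `δ`, so a union bound over `k` finishes. -/

lemma one_sub_one_div_sq_mul_one_sub_one_div_add_one {t : ℝ} (ht : t ≠ 0) (ht' : t + 1 ≠ 0) :
    (1 - 1 / t ^ 2) * (1 - 1 / (t + 1)) = 1 - 1 / t := by
  field_simp
  ring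

lemma hasSum_mul_one_sub_pow {q : ℝ} (hq₀ : 0 < q) (hq₁ : q ≤ 1) :
    HasSum (fun k : ℕ => q * (1 - q) ^ k) 1 := by
  have h := (hasSum_geometric_of_lt_one (sub_nonneg.2 hq₁) (sub_lt_self 1 hq₀)).mul_left q
  rwa [sub_sub_cancel, mul_inv_cancel₀ hq₀.ne'] at h

section Probability

variable {α : Type*} [MeasurableSpace α] {μ : Measure α}

lemma measure_lt_le_ofReal_integral_div [IsFiniteMeasure μ] {f : α → ℝ} (hf : 0 ≤ᵐ[μ] f)
    (hf_int : Integrable f μ) {c : ℝ} (hc : 0 < c) :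
    μ {x | c < f x} ≤ ENNReal.ofReal ((∫ x, f x ∂μ) / c) := by
  calc μ {x | c < f x} ≤ μ {x | c ≤ f x} := measure_mono fun _ (hx : c < _) => hx.le
    _ ≤ ENNReal.ofReal ((∫ x, f x ∂μ) / c) := by
      rw [ENNReal.le_ofReal_iff_toReal_le (measure_ne_top μ _)
        (div_nonneg (integral_nonneg_of_ae hf) hc.le), le_div_iff₀ hc, mul_comm]
      exact mul_meas_ge_le_integral_of_nonneg hf hf_int c

lemma ofReal_one_sub_le_measure_of_measure_compl_le [IsProbabilityMeasure μ] {s : Set α}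
    {δ : ℝ} (hδ : 0 ≤ δ) (hs : μ sᶜ ≤ ENNReal.ofReal δ) :
    ENNReal.ofReal (1 - δ) ≤ μ s := by
  have hcover : 1 ≤ μ s + ENNReal.ofReal δ :=
    calc 1 = μ (s ∪ sᶜ) := by rw [Set.union_compl_self, measure_univ]
      _ ≤ μ s + μ sᶜ := measure_union_le s sᶜ
      _ ≤ μ s + ENNReal.ofReal δ := by gcongr
  rw [ENNReal.ofReal_sub _ hδ, ENNReal.ofReal_one]
  exact tsub_le_iff_right.2 hcover

theorem ofReal_one_sub_le_measure_forall_le [IsProbabilityMeasure μ] {X : ℕ → α → ℝ}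
    (hX : ∀ k, 0 ≤ᵐ[μ] X k) (hX_int : ∀ k, Integrable (X k) μ) {M ε : ℕ → ℝ}
    (hM : ∀ k, 0 < M k) (hE : ∀ k, ∫ x, X k x ∂μ ≤ ε k * M k) {δ : ℝ} (hε : HasSum ε δ) :
    ENNReal.ofReal (1 - δ) ≤ μ {x | ∀ k, X k x ≤ M k} := by
  have hε₀ : ∀ k, 0 ≤ ε k := fun k =>
    nonneg_of_mul_nonneg_left ((integral_nonneg_of_ae (hX k)).trans (hE k)) (hM k)
  have hbad : ∀ k, μ {x | M k < X k x} ≤ ENNReal.ofReal (ε k) := fun k =>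
    (measure_lt_le_ofReal_integral_div (hX k) (hX_int k) (hM k)).trans
      (ENNReal.ofReal_le_ofReal ((div_le_iff₀ (hM k)).2 (hE k)))
  refine ofReal_one_sub_le_measure_of_measure_compl_le (hε.nonneg hε₀) ?_
  have hcompl : {x | ∀ k, X k x ≤ M k}ᶜ = ⋃ k, {x | M k < X k x} := by
    ext x
    simp
  calc μ {x | ∀ k, X k x ≤ M k}ᶜ ≤ ∑' k, μ {x | M k < X k x} :=
        hcompl ▸ measure_iUnion_le _
    _ ≤ ∑' k, ENNReal.ofReal (ε k) := ENNReal.tsum_le_tsum hbad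
    _ = ENNReal.ofReal δ := by rw [← ENNReal.ofReal_tsum_of_nonneg hε₀ hε.summable, hε.tsum_eq]

end Probability

theorem high_probability_linear_decay_general
    {Ω : Type*} [MeasurableSpace Ω] (P : Measure Ω) [IsProbabilityMeasure P]
    (X : ℕ → Ω → ℝ)
    (hnonneg : ∀ k ω, 0 ≤ X k ω)
    (hint : ∀ k, Integrable (X k) P)
    {a t : ℝ} (ha : 0 < a) (ht : 1 < t)
    (hE : ∀ k, (∫ ω, X k ω ∂P) ≤ a * (1 - 1 / t) ^ k)
    {δ : ℝ} (hδ : δ ∈ Set.Ioo (0 : ℝ) 1) :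
    ENNReal.ofReal (1 - δ) ≤
      P {ω | ∀ k : ℕ, X k ω ≤ a * t ^ 2 / δ * (1 - 1 / (t + 1)) ^ k} := by
  have ht₀ : 0 < t := by linarith
  have hq₁ : 1 / t ^ 2 ≤ 1 := (div_le_one (by positivity)).2 (by nlinarith)
  have hr : 0 < 1 - 1 / (t + 1) := sub_pos.2 ((div_lt_one (by linarith)).2 (by linarith))
  refine ofReal_one_sub_le_measure_forall_le (fun k => .of_forall (hnonneg k)) hint
    (fun k => by have := hδ.1; positivity) (fun k => (hE k).trans_eq ?_)
    (by simpa using (hasSum_mul_one_sub_pow (by positivity) hq₁).mul_left δ)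
  rw [← one_sub_one_div_sq_mul_one_sub_one_div_add_one ht₀.ne' (by linarith), mul_pow]
  field_simp [hδ.1.ne']

/-- From linearly decaying expectations to a high-probability uniform bound:
if `E[X_k] ≤ a (1 - 1/t)^k` for nonnegative random variables `X_k`, then with probability
at least `1 - δ`, `X_k ≤ (a t²/δ)(1 - 1/(t+1))^k` for all `k` simultaneously. -/
theorem high_probability_linear_decay
    {Ω : Type*} [MeasurableSpace Ω] (P : Measure Ω) [IsProbabilityMeasure P]
    (X : ℕ → Ω → ℝ) (hmeas : ∀ k, Measurable (X k))
    (hnonneg : ∀ k ω, 0 ≤ X k ω)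
    (hint : ∀ k, Integrable (X k) P)
    {a t : ℝ} (ha : 0 < a) (ht : 1 < t)
    (hE : ∀ k, (∫ ω, X k ω ∂P) ≤ a * (1 - 1 / t) ^ k)
    {δ : ℝ} (hδ : δ ∈ Set.Ioo (0 : ℝ) 1) :
    ENNReal.ofReal (1 - δ) ≤
      P {ω | ∀ k : ℕ, X k ω ≤ a * t ^ 2 / δ * (1 - 1 / (t + 1)) ^ k} :=
  high_probability_linear_decay_general P X hnonneg hint ha ht hE hδ
end

section
/- Let A, G be real symmetric d×d matrices with 0 ≺ A ⪯ G, let u ∈ ℝ^d with Gu ≠ Au, and let τ ∈ ℝ. Then σ_A(Broyd_τ(G, A, u)) = σ_A(G) − [ τ · (uᵀ(G−A)u)/(uᵀ A u) + (1 − τ) · (uᵀ(G−A)A⁻¹(G−A)u)/(uᵀ(G−A)u) ]. -/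
open Matrix

/-- The Broyden family quasi-Newton update `Broyd_τ(G, A, u)`. -/
noncomputable def Broyd {d : ℕ} (τ : ℝ) (G A : Matrix (Fin d) (Fin d) ℝ) (u : Fin d → ℝ) :
    Matrix (Fin d) (Fin d) ℝ :=
  if G *ᵥ u = A *ᵥ u then G
  else
    τ • (G - (u ⬝ᵥ (A *ᵥ u))⁻¹ •
            (vecMulVec (A *ᵥ u) (u ᵥ* G) + vecMulVec (G *ᵥ u) (u ᵥ* A))
          + ((u ⬝ᵥ (G *ᵥ u)) / (u ⬝ᵥ (A *ᵥ u)) + 1) •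
            ((u ⬝ᵥ (A *ᵥ u))⁻¹ • vecMulVec (A *ᵥ u) (u ᵥ* A)))
      + (1 - τ) • (G - (u ⬝ᵥ ((G - A) *ᵥ u))⁻¹ •
            vecMulVec ((G - A) *ᵥ u) (u ᵥ* (G - A)))

/-! Since `σ_A` is affine in `G`, it suffices to compute it on the two extreme members of the
family, the DFP update (`τ = 1`) and the SR1 update (`τ = 0`). Both are `G` plus rank-one terms
`a bᵀ`, and `tr(a bᵀ A⁻¹) = bᵀ A⁻¹ a`. -/

theorem Matrix.trace_vecMulVec_mul_s11 {n R : Type*} [Fintype n] [CommSemiring R]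
    (a b : n → R) (M : Matrix n n R) :
    (vecMulVec a b * M).trace = b ⬝ᵥ (M *ᵥ a) := by
  rw [vecMulVec_mul, trace_vecMulVec, dotProduct_comm, dotProduct_mulVec]

section Broyden

variable {d : ℕ} (G A : Matrix (Fin d) (Fin d) ℝ) (u : Fin d → ℝ)

noncomputable def dfpUpdate : Matrix (Fin d) (Fin d) ℝ :=
  G - (u ⬝ᵥ (A *ᵥ u))⁻¹ • (vecMulVec (A *ᵥ u) (u ᵥ* G) + vecMulVec (G *ᵥ u) (u ᵥ* A))
    + ((u ⬝ᵥ (G *ᵥ u)) / (u ⬝ᵥ (A *ᵥ u)) + 1) •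
      ((u ⬝ᵥ (A *ᵥ u))⁻¹ • vecMulVec (A *ᵥ u) (u ᵥ* A))

noncomputable def sr1Update : Matrix (Fin d) (Fin d) ℝ :=
  G - (u ⬝ᵥ ((G - A) *ᵥ u))⁻¹ • vecMulVec ((G - A) *ᵥ u) (u ᵥ* (G - A))

theorem Broyd_eq_of_mulVec_ne (τ : ℝ) (hu : G *ᵥ u ≠ A *ᵥ u) :
    Broyd τ G A u = τ • dfpUpdate G A u + (1 - τ) • sr1Update G A u :=
  if_neg hu

theorem sigmaA_smul_add_one_sub_smul (τ : ℝ) (X Y : Matrix (Fin d) (Fin d) ℝ) :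
    sigmaA A (τ • X + (1 - τ) • Y) = τ * sigmaA A X + (1 - τ) * sigmaA A Y := by
  have hA : τ • X + (1 - τ) • Y - A = τ • (X - A) + (1 - τ) • (Y - A) := by
    module
  simp only [sigmaA, hA, add_mul, smul_mul, trace_add, trace_smul, smul_eq_mul]

theorem sigmaA_dfpUpdate (hA : IsUnit A.det) :
    sigmaA A (dfpUpdate G A u) = sigmaA A G - u ⬝ᵥ ((G - A) *ᵥ u) / (u ⬝ᵥ (A *ᵥ u)) := by
  have hinv_mul : ∀ v, A⁻¹ *ᵥ (A *ᵥ v) = v := fun v => by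
    rw [mulVec_mulVec, nonsing_inv_mul _ hA, one_mulVec]
  have hmul_inv : ∀ v, (u ᵥ* A) ⬝ᵥ (A⁻¹ *ᵥ v) = u ⬝ᵥ v := fun v => by
    rw [← dotProduct_mulVec, mulVec_mulVec, mul_nonsing_inv _ hA, one_mulVec]
  simp only [sigmaA, dfpUpdate, sub_mul, add_mul, smul_mul, trace_sub, trace_add, trace_smul,
    trace_vecMulVec_mul_s11, smul_eq_mul, hinv_mul, hmul_inv, ← dotProduct_mulVec, sub_mulVec,
    dotProduct_sub]
  -- when `uᵀ A u = 0` both sides reduce to `σ_A(G)` since `x / 0 = 0`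
  rcases eq_or_ne (u ⬝ᵥ (A *ᵥ u)) 0 with hc | hc
  · simp [hc]
  · field_simp
    ring

theorem sigmaA_sr1Update :
    sigmaA A (sr1Update G A u) =
      sigmaA A G - u ⬝ᵥ ((G - A) *ᵥ (A⁻¹ *ᵥ ((G - A) *ᵥ u))) / (u ⬝ᵥ ((G - A) *ᵥ u)) := by
  simp only [sigmaA, sr1Update, sub_mul, smul_mul, trace_sub, trace_smul, trace_vecMulVec_mul_s11,
    smul_eq_mul, ← dotProduct_mulVec]
  ring

end Broyden

theorem sigma_broyden_one_step_general
    {d : ℕ} {A G : Matrix (Fin d) (Fin d) ℝ}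
    (hA : A.PosDef)
    {u : Fin d → ℝ} (hu : G *ᵥ u ≠ A *ᵥ u) (τ : ℝ) :
    sigmaA A (Broyd τ G A u) =
      sigmaA A G -
        (τ * (u ⬝ᵥ ((G - A) *ᵥ u)) / (u ⬝ᵥ (A *ᵥ u)) +
          (1 - τ) * (u ⬝ᵥ ((G - A) *ᵥ (A⁻¹ *ᵥ ((G - A) *ᵥ u)))) / (u ⬝ᵥ ((G - A) *ᵥ u))) := by
  rw [Broyd_eq_of_mulVec_ne G A u τ hu, sigmaA_smul_add_one_sub_smul,
    sigmaA_dfpUpdate G A u ((isUnit_iff_isUnit_det A).mp hA.isUnit), sigmaA_sr1Update]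
  ring

/-- Exact one-step decrease of `σ_A` under the Broyden family update. -/
theorem sigma_broyden_one_step
    {d : ℕ} {A G : Matrix (Fin d) (Fin d) ℝ}
    (hA : A.PosDef) (hAsymm : A.IsSymm) (hGsymm : G.IsSymm) (hGA : (G - A).PosSemidef)
    {u : Fin d → ℝ} (hu : G *ᵥ u ≠ A *ᵥ u) (τ : ℝ) :
    sigmaA A (Broyd τ G A u) =
      sigmaA A G -
        (τ * (u ⬝ᵥ ((G - A) *ᵥ u)) / (u ⬝ᵥ (A *ᵥ u)) +
          (1 - τ) * (u ⬝ᵥ ((G - A) *ᵥ (A⁻¹ *ᵥ ((G - A) *ᵥ u)))) / (u ⬝ᵥ ((G - A) *ᵥ u))) :=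
  sigma_broyden_one_step_general hA hu τ
end
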